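/- arXiv:1802.00943 — 4 statements merged into one kernel-verified Lean document; each statement's English description precedes it below -/
import Mathlib

section
/- The ℂ-linear span h of {X1, X2, X3} is closed under the matrix commutator (hence is a Lie subalgebra of gl(4,ℂ)) and has complex dimension 3, i.e. X1, X2, X3 are linearly independent over ℂ. -/
/-! `X1, X2, X3` span a Heisenberg algebra: `⁅X1, X2⁆ = X3` and `X3` is central. They are linearly
independent because their last columns are the first three standard basis vectors. -/

open Matrix

noncomputable section

def X1 (α β : ℂ) : Matrix (Fin 4) (Fin 4) ℂ :=
  !![1,1,0,1; 1,1,0,0; α,β,0,0; 0,0,0,0]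

def X2 (α β : ℂ) : Matrix (Fin 4) (Fin 4) ℂ :=
  !![1,1,0,0; 1,1,0,1; β-1,α+1,0,0; 0,0,0,0]

def X3 : Matrix (Fin 4) (Fin 4) ℂ :=
  !![0,0,0,0; 0,0,0,0; 0,0,0,1; 0,0,0,0]

/-- The ℂ-linear span of {X1, X2, X3}. -/
def h (α β : ℂ) : Submodule ℂ (Matrix (Fin 4) (Fin 4) ℂ) :=
  Submodule.span ℂ {X1 α β, X2 α β, X3}

theorem Submodule.lie_mem_span_of_forall_lie_mem {R L : Type*} [CommRing R] [LieRing L]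
    [LieAlgebra R L] {s : Set L} (hs : ∀ x ∈ s, ∀ y ∈ s, ⁅x, y⁆ ∈ span R s) :
    ∀ x ∈ span R s, ∀ y ∈ span R s, ⁅x, y⁆ ∈ span R s :=
  map₂_le (f := (LieModule.toEnd R L L : L →ₗ[R] Module.End R L)).mp <| by
    rw [map₂_span_span, span_le]
    rintro _ ⟨x, hx, y, hy, rfl⟩
    exact hs x hx y hy

lemma lie_X1_X2 (α β : ℂ) : ⁅X1 α β, X2 α β⁆ = X3 := by
  ext i j
  fin_cases i <;> fin_cases j <;> simp [X1, X2, X3, Ring.lie_def] <;> ring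

lemma lie_X1_X3 (α β : ℂ) : ⁅X1 α β, X3⁆ = 0 := by
  ext i j
  fin_cases i <;> fin_cases j <;> simp [X1, X3, Ring.lie_def]

lemma lie_X2_X3 (α β : ℂ) : ⁅X2 α β, X3⁆ = 0 := by
  ext i j
  fin_cases i <;> fin_cases j <;> simp [X2, X3, Ring.lie_def]

lemma linearIndependent_X1_X2_X3 (α β : ℂ) : LinearIndependent ℂ ![X1 α β, X2 α β, X3] := by
  rw [Fintype.linearIndependent_iff]
  intro c hc i
  -- the last column of `∑ cᵢ Xᵢ` is `(c₀, c₁, c₂, 0)`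
  have := congrFun (congrFun hc i.castSucc) 3
  fin_cases i <;> simpa [Fin.sum_univ_three, X1, X2, X3] using this

section

attribute [local instance] LieRing.ofAssociativeRing

lemma lie_mem_h (α β : ℂ) : ∀ A ∈ h α β, ∀ B ∈ h α β, ⁅A, B⁆ ∈ h α β := by
  refine Submodule.lie_mem_span_of_forall_lie_mem ?_
  rintro x (rfl | rfl | rfl) y (rfl | rfl | rfl) <;>
    simp [← lie_skew (X2 α β) (X1 α β), ← lie_skew X3 (X1 α β), ← lie_skew X3 (X2 α β),
      lie_X1_X2, lie_X1_X3, lie_X2_X3, Submodule.mem_span_of_mem]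

end

/-- h is closed under the matrix commutator and has complex dimension 3;
X1, X2, X3 are linearly independent over ℂ. -/
theorem h_subalgebra_dim_three (α β : ℂ) :
    (∀ A ∈ h α β, ∀ B ∈ h α β, ⁅A, B⁆ ∈ h α β) ∧
    Module.finrank ℂ (h α β) = 3 ∧
    LinearIndependent ℂ ![X1 α β, X2 α β, X3] := by
  have hli := linearIndependent_X1_X2_X3 α β
  refine ⟨lie_mem_h α β, ?_, hli⟩
  have := finrank_span_eq_card hli
  rwa [range_cons, range_cons_cons_empty, Set.singleton_union, Fintype.card_fin] at this
end
end

section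
/- The matrices X1s and X1n give the Chevalley–Jordan decomposition of X1: X1 = X1s + X1n, X1s·X1n = X1n·X1s, X1n is a nilpotent matrix, and X1s is semisimple; in fact X1s satisfies X1s² = 2·X1s, so it is diagonalizable. -/
open Matrix

noncomputable section

/-- A matrix is diagonalizable if it is conjugate to a diagonal matrix. -/
def IsDiagonalizable {n : ℕ} (A : Matrix (Fin n) (Fin n) ℂ) : Prop :=
  ∃ P : Matrix (Fin n) (Fin n) ℂ, IsUnit P ∧ (P⁻¹ * A * P).IsDiag

def X1s (α β : ℂ) : Matrix (Fin 4) (Fin 4) ℂ :=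
  !![1,1,0,1/2; 1,1,0,1/2; (α+β)/2,(α+β)/2,0,(α+β)/4; 0,0,0,0]

def X1n (α β : ℂ) : Matrix (Fin 4) (Fin 4) ℂ :=
  !![0,0,0,1/2; 0,0,0,-1/2; (α-β)/2,-(α-β)/2,0,-(α+β)/4; 0,0,0,0]

/-! `X1s` and `X1n` annihilate each other from both sides, so they commute. The square of `X1n`
is a multiple of the matrix unit `E₂₃`, which `X1n` kills, so `X1n³ = 0`. Finally `X1s / 2` is
idempotent, so an eigenbasis conjugates `X1s` to `diag(2, 0, 0, 0)`. -/

theorem isDiagonalizable_of_mul_eq_mul_diagonal {n : ℕ} {A P : Matrix (Fin n) (Fin n) ℂ}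
    {d : Fin n → ℂ} (hP : IsUnit P.det) (h : A * P = P * diagonal d) : IsDiagonalizable A :=
  ⟨P, (isUnit_iff_isUnit_det P).2 hP, by
    rw [mul_assoc, h, ← mul_assoc, nonsing_inv_mul _ hP, one_mul]
    exact isDiag_diagonal d⟩

section

variable (α β : ℂ)

theorem X1_eq_X1s_add_X1n : X1 α β = X1s α β + X1n α β := by
  ext i j
  fin_cases i <;> fin_cases j <;> simp [X1, X1s, X1n] <;> ring

theorem X1s_mul_X1n : X1s α β * X1n α β = 0 := by
  ext i j
  fin_cases i <;> fin_cases j <;> simp [X1s, X1n, mul_apply, Fin.sum_univ_four] <;> ring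

theorem X1n_mul_X1s : X1n α β * X1s α β = 0 := by
  ext i j
  fin_cases i <;> fin_cases j <;> simp [X1s, X1n, mul_apply, Fin.sum_univ_four] <;> ring

theorem X1n_pow_three : X1n α β ^ 3 = 0 := by
  ext i j
  fin_cases i <;> fin_cases j <;> simp [X1n, pow_succ, mul_apply, Fin.sum_univ_four]

theorem X1s_mul_self : X1s α β * X1s α β = (2 : ℂ) • X1s α β := by
  ext i j
  fin_cases i <;> fin_cases j <;> simp [X1s, mul_apply, Fin.sum_univ_four] <;> ring

/-- Column `0` spans the `2`-eigenspace of `X1s`; columns `1`, `2`, `3` span its kernel. -/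
def X1sEigenbasis : Matrix (Fin 4) (Fin 4) ℂ :=
  !![1,1,0,1; 1,-1,0,0; (α+β)/2,0,1,0; 0,0,0,-2]

theorem X1s_mul_X1sEigenbasis :
    X1s α β * X1sEigenbasis α β = X1sEigenbasis α β * diagonal ![2, 0, 0, 0] := by
  ext i j
  fin_cases i <;> fin_cases j <;>
    simp [X1s, X1sEigenbasis, mul_apply, Fin.sum_univ_four] <;> ring

theorem det_X1sEigenbasis : (X1sEigenbasis α β).det = 4 := by
  simp [X1sEigenbasis, det_succ_row_zero, Fin.sum_univ_succ, Fin.succAbove]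
  ring

theorem isDiagonalizable_X1s : IsDiagonalizable (X1s α β) :=
  isDiagonalizable_of_mul_eq_mul_diagonal (by rw [det_X1sEigenbasis]; norm_num)
    (X1s_mul_X1sEigenbasis α β)

end

theorem jordan_decomposition_X1_general (α β : ℂ) :
    X1 α β = X1s α β + X1n α β ∧
    X1s α β * X1n α β = X1n α β * X1s α β ∧
    IsNilpotent (X1n α β) ∧
    X1s α β * X1s α β = (2 : ℂ) • X1s α β ∧
    IsDiagonalizable (X1s α β) :=
  ⟨X1_eq_X1s_add_X1n α β, (X1s_mul_X1n α β).trans (X1n_mul_X1s α β).symm,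
    ⟨3, X1n_pow_three α β⟩, X1s_mul_self α β, isDiagonalizable_X1s α β⟩

/-- X1s and X1n give the Chevalley–Jordan decomposition of X1. -/
theorem jordan_decomposition_X1 (α β : ℂ) (hαβ : α + β ≠ 0) :
    X1 α β = X1s α β + X1n α β ∧
    X1s α β * X1n α β = X1n α β * X1s α β ∧
    IsNilpotent (X1n α β) ∧
    X1s α β * X1s α β = (2 : ℂ) • X1s α β ∧
    IsDiagonalizable (X1s α β) :=
  jordan_decomposition_X1_general α β
end
end

section
/- For all x1, x2, x3 ∈ ℂ, the characteristic polynomial of the matrix X = x1·X1 + x2·X2 + x3·X3 is T³·(T − 2(x1 + x2)); in particular the eigenvalues of X are 0 and 2(x1 + x2). -/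
open Matrix

noncomputable section

/-!
Every matrix of the span has zero third column and zero fourth row, so its characteristic
polynomial is `X ^ 2` times that of its upper left `2 × 2` block. That block is
`(x1 + x2) • !![1, 1; 1, 1]`, of trace `2 (x1 + x2)` and determinant `0`.
-/

open Polynomial

theorem smul_X1_add_smul_X2_add_smul_X3 (α β x1 x2 x3 : ℂ) :
    x1 • X1 α β + x2 • X2 α β + x3 • X3 =
      !![x1 + x2, x1 + x2, 0, x1;
         x1 + x2, x1 + x2, 0, x2;
         x1 * α + x2 * (β - 1), x1 * β + x2 * (α + 1), 0, x3;
         0, 0, 0, 0] := by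
  simp [X1, X2, X3]

theorem charpoly_of_col_two_row_three_eq_zero {R : Type*} [CommRing R]
    (a b c d e f g h i : R) :
    (!![a, b, 0, c; d, e, 0, f; g, h, 0, i; 0, 0, 0, 0] : Matrix (Fin 4) (Fin 4) R).charpoly
      = X ^ 2 * (!![a, b; d, e] : Matrix (Fin 2) (Fin 2) R).charpoly := by
  rw [charpoly, charpoly, det_succ_row_zero, det_fin_two]
  simp [Fin.sum_univ_succ, det_fin_three, charmatrix_apply, Fin.succAbove]
  ring

theorem charpoly_of_const_fin_two {R : Type*} [CommRing R] [Nontrivial R] (s : R) :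
    (!![s, s; s, s] : Matrix (Fin 2) (Fin 2) R).charpoly = X * (X - C (2 * s)) := by
  rw [charpoly_fin_two, trace_fin_two, det_fin_two]
  simp only [of_apply, cons_val', cons_val_zero, cons_val_one, empty_val', cons_val_fin_one,
    sub_self, C_0]
  rw [two_mul, C_add]
  ring

theorem charpoly_formula_general (α β : ℂ) (x1 x2 x3 : ℂ) :
    (x1 • X1 α β + x2 • X2 α β + x3 • X3).charpoly
      = X ^ 3 * (X - C (2 * (x1 + x2))) ∧
    spectrum ℂ (x1 • X1 α β + x2 • X2 α β + x3 • X3) = {0, 2 * (x1 + x2)} := by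
  have hcharpoly : (x1 • X1 α β + x2 • X2 α β + x3 • X3).charpoly
      = X ^ 3 * (X - C (2 * (x1 + x2))) := by
    rw [smul_X1_add_smul_X2_add_smul_X3, charpoly_of_col_two_row_three_eq_zero,
      charpoly_of_const_fin_two]
    ring
  refine ⟨hcharpoly, ?_⟩
  ext μ
  rw [mem_spectrum_iff_isRoot_charpoly, hcharpoly]
  simp [sub_eq_zero]

open Polynomial in
/-- The characteristic polynomial of X = x1·X1 + x2·X2 + x3·X3 is T³·(T − 2(x1+x2));
in particular the eigenvalues of X are 0 and 2(x1+x2). -/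
theorem charpoly_formula (α β : ℂ) (hαβ : α + β ≠ 0) (x1 x2 x3 : ℂ) :
    (x1 • X1 α β + x2 • X2 α β + x3 • X3).charpoly
      = X ^ 3 * (X - C (2 * (x1 + x2))) ∧
    spectrum ℂ (x1 • X1 α β + x2 • X2 α β + x3 • X3) = {0, 2 * (x1 + x2)} :=
  charpoly_formula_general α β x1 x2 x3
end
end

section
/- For all x1, x2, x3 ∈ ℂ, the matrix X = x1·X1 + x2·X2 + x3·X3 is nilpotent if and only if x1 + x2 = 0. -/
open Matrix

set_option maxHeartbeats 1000000
noncomputable section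

lemma cube_zero (p q a b r : ℂ) :
    (!![0,0,0,p; 0,0,0,q; a,b,0,r; 0,0,0,0] : Matrix (Fin 4) (Fin 4) ℂ) ^ 3 = 0 := by
  rw [pow_succ, pow_succ, pow_one]
  ext i j
  fin_cases i <;> fin_cases j <;>
    simp [Matrix.mul_apply, Fin.sum_univ_four]

/-- X = x1·X1 + x2·X2 + x3·X3 is nilpotent iff x1 + x2 = 0. -/
theorem nilpotent_iff (α β : ℂ) (hαβ : α + β ≠ 0) (x1 x2 x3 : ℂ) :
    IsNilpotent (x1 • X1 α β + x2 • X2 α β + x3 • X3) ↔ x1 + x2 = 0 := by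
  constructor
  · intro hn
    have ht := (Matrix.isNilpotent_trace_of_isNilpotent hn).eq_zero
    simp [Matrix.trace, X1, X2, X3, Fin.sum_univ_four, Matrix.diag,
      Matrix.vecHead, Matrix.vecTail] at ht
    linear_combination ht
  · intro hs
    have hM : x1 • X1 α β + x2 • X2 α β + x3 • X3 =
        !![0,0,0,x1; 0,0,0,x2; x1*α + x2*(β-1), x1*β + x2*(α+1),0,x3; 0,0,0,0] := by
      ext i j
      fin_cases i <;> fin_cases j <;>
        simp [X1, X2, X3, Matrix.vecHead, Matrix.vecTail] <;>
        linear_combination hs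
    rw [hM]
    exact ⟨3, cube_zero _ _ _ _ _⟩
end
end
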